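/- arXiv:1501.07054 — 2 statements merged into one kernel-verified Lean document; each statement's English description precedes it below -/
import Mathlib

section
/- Reduction of the local planning problem outside the superlevel set M_H (Lemma 3.1): let V ⊆ Ω, let c_H > 0, and let c : ℝ² → ℝ be a continuous cost with c(y) = c_H for all y ∈ Ω \ V and c(y) ≥ c_H for all y ∈ Ω. Let φ_H be the value function for the constant cost c_H and set m_H := inf_{p ∈ V} φ_H(p). Then for every z ∈ Ω with φ_H(z) < m_H one has φ_c(z) = φ_H(z); that is, the localized potential coincides with the default potential φ_H at every point lying outside the superlevel set M_H = { x ∈ Ω : φ_H(x) ≥ m_H }. -/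
open MeasureTheory Set
open scoped ENNReal

noncomputable section

/-- The plane `ℝ²`. -/
abbrev E2 := EuclideanSpace ℝ (Fin 2)

/-- An admissible path from `z` in the domain `Ω` with exit set `Γ`:
a 1-Lipschitz map `γ : [0,T] → ℝ²` staying in `Ω`, starting at `z`
and ending in `Γ`. -/
def IsAdmissiblePath (Ω Γ : Set E2) (z : E2) (T : ℝ) (γ : ℝ → E2) : Prop :=
  0 ≤ T ∧ LipschitzOnWith 1 γ (Icc 0 T) ∧ (∀ s ∈ Icc (0:ℝ) T, γ s ∈ Ω) ∧
    γ 0 = z ∧ γ T ∈ Γ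

/-- The cost of a path `γ : [0,T] → ℝ²` for the cost function `c`. -/
def pathCost (c : E2 → ℝ) (T : ℝ) (γ : ℝ → E2) : ℝ := ∫ s in (0:ℝ)..T, c (γ s)

/-- The value function `φ_c(z) ∈ [0,∞]`: the infimum of the costs of all
admissible paths from `z`, equal to `+∞` if no admissible path exists. -/
def valueFn (Ω Γ : Set E2) (c : E2 → ℝ) (z : E2) : ℝ≥0∞ :=
  ⨅ (T : ℝ) (γ : ℝ → E2) (_ : IsAdmissiblePath Ω Γ z T γ),
    ENNReal.ofReal (pathCost c T γ)


lemma pathCost_const (cH : ℝ) (T : ℝ) (γ : ℝ → E2) :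
    pathCost (fun _ => cH) T γ = T * cH := by
  simp [pathCost, intervalIntegral.integral_const, smul_eq_mul]

lemma valueFn_le {Ω Γ : Set E2} {c : E2 → ℝ} {z : E2} {T : ℝ} {γ : ℝ → E2}
    (h : IsAdmissiblePath Ω Γ z T γ) :
    valueFn Ω Γ c z ≤ ENNReal.ofReal (pathCost c T γ) :=
  iInf_le_of_le T (iInf_le_of_le γ (iInf_le _ h))

/-- Reduction of the local planning problem outside the superlevel set `M_H`
(Lemma 3.1): if the cost agrees with the constant `c_H` outside the visibility
area `V` and is at least `c_H` everywhere, then the localized potential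
coincides with the default potential `φ_H` wherever `φ_H < m_H`. -/
theorem valueFn_reduction_outside_MH (Ω Γ : Set E2) (hΓne : Γ.Nonempty) (hΓΩ : Γ ⊆ Ω)
    (V : Set E2) (hV : V ⊆ Ω) (cH : ℝ) (hcH : 0 < cH)
    (c : E2 → ℝ) (hc : Continuous c)
    (hout : ∀ y ∈ Ω \ V, c y = cH) (hge : ∀ y ∈ Ω, cH ≤ c y) :
    ∀ z ∈ Ω,
      valueFn Ω Γ (fun _ => cH) z < (⨅ p ∈ V, valueFn Ω Γ (fun _ => cH) p) →
      valueFn Ω Γ c z = valueFn Ω Γ (fun _ => cH) z := by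

  intro z hz hlt
  set mH := ⨅ p ∈ V, valueFn Ω Γ (fun _ => cH) p with hmH
  have avoid : ∀ T γ, IsAdmissiblePath Ω Γ z T γ →
      ENNReal.ofReal (pathCost (fun _ => cH) T γ) < mH →
      ∀ s ∈ Icc (0:ℝ) T, γ s ∉ V := by
    intro T γ hadm hcost s hs hsV
    obtain ⟨hT, hLip, hmem, h0, hend⟩ := hadm
    have hs0 : 0 ≤ s := hs.1
    have hsT : s ≤ T := hs.2
    have hadm' : IsAdmissiblePath Ω Γ (γ s) (T - s) (fun t => γ (s + t)) := by
      refine ⟨by linarith, ?_, ?_, by simp, ?_⟩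
      · intro x hx y hy
        have hx' : s + x ∈ Icc (0:ℝ) T := ⟨by linarith [hx.1], by linarith [hx.2]⟩
        have hy' : s + y ∈ Icc (0:ℝ) T := ⟨by linarith [hy.1], by linarith [hy.2]⟩
        calc edist (γ (s+x)) (γ (s+y)) ≤ 1 * edist (s+x) (s+y) := hLip hx' hy'
          _ = 1 * edist x y := by rw [edist_add_left]
      · intro t ht
        exact hmem _ ⟨by linarith [ht.1], by linarith [ht.2]⟩
      · simpa using hend
    have h1 : mH ≤ valueFn Ω Γ (fun _ => cH) (γ s) := iInf₂_le (γ s) hsV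
    have h2 := valueFn_le (c := fun _ => cH) hadm'
    rw [pathCost_const] at h2 hcost
    have h3 : ENNReal.ofReal ((T - s) * cH) ≤ ENNReal.ofReal (T * cH) :=
      ENNReal.ofReal_le_ofReal (mul_le_mul_of_nonneg_right (by linarith) hcH.le)
    exact absurd (h1.trans (h2.trans h3)) (not_le.mpr hcost)
  refine le_antisymm ?_ ?_
  · refine le_of_forall_gt_imp_ge_of_dense fun b hb => ?_
    have hlt' : valueFn Ω Γ (fun _ => cH) z < min b mH := lt_min hb hlt
    obtain ⟨T, hT⟩ := iInf_lt_iff.mp hlt'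
    obtain ⟨γ, hγ⟩ := iInf_lt_iff.mp hT
    obtain ⟨hadm, hc'⟩ := iInf_lt_iff.mp hγ
    have hav := avoid T γ hadm (hc'.trans_le (min_le_right _ _))
    have heq : pathCost c T γ = pathCost (fun _ => cH) T γ := by
      unfold pathCost
      apply intervalIntegral.integral_congr
      intro s hs
      rw [uIcc_of_le hadm.1] at hs
      exact hout _ ⟨hadm.2.2.1 s hs, hav s hs⟩
    calc valueFn Ω Γ c z ≤ ENNReal.ofReal (pathCost c T γ) := valueFn_le hadm
      _ = ENNReal.ofReal (pathCost (fun _ => cH) T γ) := by rw [heq]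
      _ ≤ b := le_of_lt (hc'.trans_le (min_le_left _ _))
  · refine le_iInf fun T => le_iInf fun γ => le_iInf fun hadm => ?_
    refine (valueFn_le hadm).trans (ENNReal.ofReal_le_ofReal ?_)
    unfold pathCost
    have hT := hadm.1
    have hcont : ContinuousOn γ (Icc 0 T) := hadm.2.1.continuousOn
    apply intervalIntegral.integral_mono_on hT
    · exact intervalIntegrable_const
    · exact (hc.comp_continuousOn hcont).intervalIntegrable_of_Icc hT
    · intro s hs; exact hge _ (hadm.2.2.1 s hs)
end
end

section
/- The smoothed normalization operator is continuous: the map P : ℝ² → ℝ² is continuous on all of ℝ², in particular at the origin (where P(0) = 0) and across the sphere ‖x‖ = ℓ. -/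
open scoped Classical

noncomputable section

/-- The smoothed normalization operator `P : ℝ² → ℝ²` with parameters `k, ℓ > 0`:
`P(x) = x/‖x‖` if `‖x‖ > ℓ`,
`P(x) = sin( (π / (2·arctan(kℓ))) · arctan(k‖x‖) ) · x/‖x‖` if `0 < ‖x‖ ≤ ℓ`,
and `P(0) = 0`. -/

def smoothP (k ℓ : ℝ) (x : EuclideanSpace ℝ (Fin 2)) : EuclideanSpace ℝ (Fin 2) :=
  if x = 0 then 0
  else if ℓ < ‖x‖ then ‖x‖⁻¹ • x
  else Real.sin (Real.pi / (2 * Real.arctan (k * ℓ)) * Real.arctan (k * ‖x‖)) •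
    (‖x‖⁻¹ • x)

/-!
`P` is radial: `P x = g ‖x‖ • (x / ‖x‖)` for the single profile
`g r = sin (π / (2 arctan (kℓ)) · arctan (k · min r ℓ))`, which is continuous, vanishes at `0`
and equals `sin (π / 2) = 1` for `r ≥ ℓ`. Away from the origin such a map is continuous because
`x ↦ x / ‖x‖` is; at the origin it is squeezed by `|g ‖x‖| → |g 0| = 0`.
-/

section RadialMap

variable {E : Type*} [NormedAddCommGroup E] [NormedSpace ℝ E]

theorem norm_smul_inv_norm_smul_le_abs (g : ℝ → ℝ) (x : E) :
    ‖g ‖x‖ • ‖x‖⁻¹ • x‖ ≤ |g ‖x‖| := by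
  rcases eq_or_ne x 0 with rfl | hx
  · simp
  · rw [norm_smul, norm_smul, norm_inv, norm_norm, inv_mul_cancel₀ (norm_ne_zero_iff.2 hx),
      Real.norm_eq_abs, mul_one]

theorem continuous_smul_inv_norm_smul {g : ℝ → ℝ} (hg : Continuous g) (hg0 : g 0 = 0) :
    Continuous fun x : E => g ‖x‖ • ‖x‖⁻¹ • x := by
  rw [continuous_iff_continuousAt]
  intro x
  rcases eq_or_ne x 0 with rfl | hx
  · have hlim : Filter.Tendsto (fun y : E => |g ‖y‖|) (nhds 0) (nhds 0) := by
      simpa [hg0] using ((hg.comp continuous_norm).abs).tendsto (0 : E)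
    simpa [ContinuousAt, hg0] using
      squeeze_zero_norm (norm_smul_inv_norm_smul_le_abs g) hlim
  · exact (hg.comp continuous_norm).continuousAt.smul
      ((continuous_norm.continuousAt.inv₀ (norm_ne_zero_iff.2 hx)).smul continuousAt_id)

end RadialMap

def smoothPProfile (k ℓ r : ℝ) : ℝ :=
  Real.sin (Real.pi / (2 * Real.arctan (k * ℓ)) * Real.arctan (k * min r ℓ))

theorem continuous_smoothPProfile (k ℓ : ℝ) : Continuous (smoothPProfile k ℓ) := by
  unfold smoothPProfile
  fun_prop

theorem smoothPProfile_zero (k : ℝ) {ℓ : ℝ} (hℓ : 0 ≤ ℓ) : smoothPProfile k ℓ 0 = 0 := by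
  simp [smoothPProfile, min_eq_left hℓ]

theorem smoothPProfile_of_le {k ℓ r : ℝ} (hkℓ : k * ℓ ≠ 0) (hr : ℓ ≤ r) :
    smoothPProfile k ℓ r = 1 := by
  have hatan : Real.arctan (k * ℓ) ≠ 0 := by
    rwa [Ne, ← Real.arctan_zero, Real.arctan_injective.eq_iff]
  have hangle : Real.pi / (2 * Real.arctan (k * ℓ)) * Real.arctan (k * ℓ) = Real.pi / 2 := by
    field_simp
  rw [smoothPProfile, min_eq_right hr, hangle, Real.sin_pi_div_two]

theorem smoothP_eq_smoothPProfile_smul {k ℓ : ℝ} (hkℓ : k * ℓ ≠ 0) (hℓ : 0 ≤ ℓ)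
    (x : EuclideanSpace ℝ (Fin 2)) :
    smoothP k ℓ x = smoothPProfile k ℓ ‖x‖ • ‖x‖⁻¹ • x := by
  unfold smoothP
  split_ifs with hx hlt
  · simp [hx, smoothPProfile_zero k hℓ]
  · rw [smoothPProfile_of_le hkℓ hlt.le, one_smul]
  · rw [smoothPProfile, min_eq_left (not_lt.1 hlt)]

/-- The smoothed normalization operator is continuous on all of `ℝ²`. -/
theorem smoothP_continuous (k ℓ : ℝ) (hk : 0 < k) (hℓ : 0 < ℓ) :
    Continuous (smoothP k ℓ) := by
  have hkℓ : k * ℓ ≠ 0 := (mul_pos hk hℓ).ne'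
  rw [funext (smoothP_eq_smoothPProfile_smul hkℓ hℓ.le)]
  exact continuous_smul_inv_norm_smul (continuous_smoothPProfile k ℓ)
    (smoothPProfile_zero k hℓ.le)
end
end
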